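/- arXiv:2310.13334 — 2 statements merged into one kernel-verified Lean document; each statement's English description precedes it below -/
import Mathlib

section
/- (Lemma 1) Suppose the ADMM optimality conditions hold at step k, namely: (i) for all z ∈ Z, θ1(z) − θ1(z^{k+1}) + ⟨z − z^{k+1}, λ^k − β(Dx^k − z^{k+1})⟩ ≥ 0; (ii) for all x ∈ X, θ2(x) − θ2(x^{k+1}, ) + ⟨x − x^{k+1}, −Dᵀλ^k + βDᵀ(Dx^{k+1} − z^{k+1})⟩ ≥ 0; (iii) λ^{k+1} = λ^k − β(Dx^{k+1} − z^{k+1}). Then for every ω = (z, x, λ) ∈ Z × X × R^n, θ1(z) + θ2(x) − θ1(z^{k+1}) − θ2(x^{k+1}) + ⟨ω − ω^{k+1}, F(ω)⟩ ≥ β⟨z − z^{k+1}, Dx^k − Dx^{k+1}⟩ + (1/β)⟨λ − λ^{k+1}, λ^k − λ^{k+1}⟩, where ω^{k+1} = (z^{k+1}, x^{k+1}, λ^{k+1}). -/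
open scoped RealInnerProductSpace

/-- Matrix-vector multiplication, landing in Euclidean space. -/
noncomputable def mulv {n d : ℕ} (A : Matrix (Fin n) (Fin d) ℝ)
    (x : EuclideanSpace ℝ (Fin d)) : EuclideanSpace ℝ (Fin n) := WithLp.toLp 2 (A.mulVec x)

/-- `θ₁(z) = ‖z‖₁`, the sum of absolute values of the entries of `z`. -/
noncomputable def theta1 {n : ℕ} (z : EuclideanSpace ℝ (Fin n)) : ℝ := ∑ i, |z i|

/-- `θ₂(x) = (α/2)‖y − Mx‖₂²`. -/
noncomputable def theta2 {m d : ℕ} (M : Matrix (Fin m) (Fin d) ℝ)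
    (y : EuclideanSpace ℝ (Fin m)) (α : ℝ) (x : EuclideanSpace ℝ (Fin d)) : ℝ :=
  α / 2 * ‖y - mulv M x‖ ^ 2

/-- Lemma 1: the ADMM iterates satisfy, for every `ω = (z, x, λ) ∈ Z × X × ℝⁿ`,
`θ(u) − θ(u^{k+1}) + ⟨ω − ω^{k+1}, F(ω)⟩
   ≥ β⟨z − z^{k+1}, Dx^k − Dx^{k+1}⟩ + (1/β)⟨λ − λ^{k+1}, λ^k − λ^{k+1}⟩`,
where `F(ω) = (λ, −Dᵀλ, Dx − z)` and the inner product on the product space is the sum of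
the componentwise standard inner products. -/
theorem stmt_3 {n d m : ℕ} (D : Matrix (Fin n) (Fin d) ℝ) (M : Matrix (Fin m) (Fin d) ℝ)
    (y : EuclideanSpace ℝ (Fin m)) (α β : ℝ) (hα : 0 < α) (hβ : 0 < β)
    (Z : Set (EuclideanSpace ℝ (Fin n))) (X : Set (EuclideanSpace ℝ (Fin d)))
    (hZ : Convex ℝ Z) (hX : Convex ℝ X)
    (zk zk1 : EuclideanSpace ℝ (Fin n)) (xk xk1 : EuclideanSpace ℝ (Fin d))
    (lk lk1 : EuclideanSpace ℝ (Fin n))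
    (hzkZ : zk ∈ Z) (hzk1Z : zk1 ∈ Z) (hxkX : xk ∈ X) (hxk1X : xk1 ∈ X)
    (h1 : ∀ z ∈ Z, theta1 z - theta1 zk1 +
      ⟪z - zk1, lk - β • (mulv D xk - zk1)⟫ ≥ 0)
    (h2 : ∀ x ∈ X, theta2 M y α x - theta2 M y α xk1 +
      ⟪x - xk1, -(mulv D.transpose lk) + β • mulv D.transpose (mulv D xk1 - zk1)⟫ ≥ 0)
    (h3 : lk1 = lk - β • (mulv D xk1 - zk1)) :
    ∀ z ∈ Z, ∀ x ∈ X, ∀ l : EuclideanSpace ℝ (Fin n),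
      theta1 z + theta2 M y α x - theta1 zk1 - theta2 M y α xk1 +
        (⟪z - zk1, l⟫ + ⟪x - xk1, -(mulv D.transpose l)⟫ + ⟪l - lk1, mulv D x - z⟫) ≥
      β * ⟪z - zk1, mulv D xk - mulv D xk1⟫ + (1 / β) * ⟪l - lk1, lk - lk1⟫ := by
  intro z hz x hx l
  have adj : ∀ (v : EuclideanSpace ℝ (Fin d)) (w : EuclideanSpace ℝ (Fin n)),
      ⟪v, mulv D.transpose w⟫ = ⟪mulv D v, w⟫ := by
    intro v w
    simp only [mulv, PiLp.inner_apply, RCLike.inner_apply, starRingEnd_apply, star_trivial,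
      Matrix.mulVec, dotProduct, Matrix.transpose_apply, Finset.mul_sum,
      Finset.sum_mul]
    rw [Finset.sum_comm]
    apply Finset.sum_congr rfl
    intros; apply Finset.sum_congr rfl
    intros; ring
  have H1 := h1 z hz
  have H2 := h2 x hx
  have hlk : lk = lk1 + β • (mulv D xk1 - zk1) := by rw [h3]; abel
  have mulv_sub : ∀ (A : Matrix (Fin n) (Fin d) ℝ) (a b : EuclideanSpace ℝ (Fin d)),
      mulv A (a - b) = mulv A a - mulv A b := by
    intro A a b; simp only [mulv]; exact congrArg (WithLp.toLp 2) (Matrix.mulVec_sub A a b)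
  have mulvT_sub : ∀ (a b : EuclideanSpace ℝ (Fin n)),
      mulv D.transpose (a - b) = mulv D.transpose a - mulv D.transpose b := by
    intro a b; simp only [mulv]; exact congrArg (WithLp.toLp 2) (Matrix.mulVec_sub _ a b)
  have hβ' : β ≠ 0 := ne_of_gt hβ
  have E : ⟪z - zk1, l⟫ + ⟪x - xk1, -(mulv D.transpose l)⟫ + ⟪l - lk1, mulv D x - z⟫
      - β * ⟪z - zk1, mulv D xk - mulv D xk1⟫ - (1 / β) * ⟪l - lk1, lk - lk1⟫
      = ⟪z - zk1, lk - β • (mulv D xk - zk1)⟫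
        + ⟪x - xk1, -(mulv D.transpose lk) + β • mulv D.transpose (mulv D xk1 - zk1)⟫ := by
    rw [hlk, mulvT_sub]
    simp only [inner_sub_left, inner_sub_right, inner_add_left, inner_add_right,
      inner_neg_left, inner_neg_right, real_inner_smul_left, real_inner_smul_right,
      adj, mulv_sub]
    simp only [real_inner_comm l z, real_inner_comm l zk1, real_inner_comm l (mulv D x),
      real_inner_comm l (mulv D xk), real_inner_comm l (mulv D xk1), real_inner_comm l lk1,
      real_inner_comm lk1 z, real_inner_comm lk1 zk1, real_inner_comm lk1 (mulv D x),
      real_inner_comm lk1 (mulv D xk), real_inner_comm lk1 (mulv D xk1),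
      real_inner_comm (mulv D x) z, real_inner_comm (mulv D x) zk1,
      real_inner_comm (mulv D xk) z, real_inner_comm (mulv D xk) zk1,
      real_inner_comm (mulv D xk1) z, real_inner_comm (mulv D xk1) zk1]
    field_simp
    ring
  linarith
end

section
/- (Lemma 3) Suppose λ^{k+1} = λ^k − β(Dx^{k+1} − z^{k+1}) with β > 0, and suppose x^k, x^{k+1} ∈ X satisfy: for all x ∈ X, θ2(x) − θ2(x^{k+1}) + ⟨x − x^{k+1}, −Dᵀλ^{k+1}⟩ ≥ 0, and for all x ∈ X, θ2(x) − θ2(x^k) + ⟨x − x^k, −Dᵀλ^k⟩ ≥ 0. Then β‖Dx^k − z^{k+1}‖₂² ≥ β‖Dx^k − Dx^{k+1}‖₂² + (1/β)‖λ^k − λ^{k+1}‖₂². -/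
open scoped RealInnerProductSpace

lemma mulv_adj' {n d : ℕ} (A : Matrix (Fin n) (Fin d) ℝ)
    (x : EuclideanSpace ℝ (Fin d)) (l : EuclideanSpace ℝ (Fin n)) :
    ⟪x, mulv A.transpose l⟫ = ⟪mulv A x, l⟫ := by
  simp only [mulv, PiLp.inner_apply, RCLike.inner_apply, conj_trivial]
  simp only [Matrix.mulVec, dotProduct, Matrix.transpose_apply,
    Finset.mul_sum, Finset.sum_mul]
  rw [Finset.sum_comm]
  congr 1; ext i; congr 1; ext j; ring

lemma mulv_sub' {n d : ℕ} (A : Matrix (Fin n) (Fin d) ℝ)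
    (x x' : EuclideanSpace ℝ (Fin d)) :
    mulv A x - mulv A x' = mulv A (x - x') := by
  ext i
  simp [mulv, Matrix.mulVec, dotProduct, Finset.sum_sub_distrib, sub_mul, mul_sub]

/-- Lemma 3: `β‖Dx^k − z^{k+1}‖² ≥ β‖Dx^k − Dx^{k+1}‖² + (1/β)‖λ^k − λ^{k+1}‖²`. -/
theorem stmt_6 {n d m : ℕ} (D : Matrix (Fin n) (Fin d) ℝ) (M : Matrix (Fin m) (Fin d) ℝ)
    (y : EuclideanSpace ℝ (Fin m)) (α β : ℝ) (hα : 0 < α) (hβ : 0 < β)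
    (X : Set (EuclideanSpace ℝ (Fin d))) (hX : Convex ℝ X)
    (zk1 : EuclideanSpace ℝ (Fin n))
    (xk xk1 : EuclideanSpace ℝ (Fin d)) (hxk : xk ∈ X) (hxk1 : xk1 ∈ X)
    (lk lk1 : EuclideanSpace ℝ (Fin n))
    (h3 : lk1 = lk - β • (mulv D xk1 - zk1))
    (hk1 : ∀ x ∈ X, theta2 M y α x - theta2 M y α xk1 +
      ⟪x - xk1, -(mulv D.transpose lk1)⟫ ≥ 0)
    (hk : ∀ x ∈ X, theta2 M y α x - theta2 M y α xk +
      ⟪x - xk, -(mulv D.transpose lk)⟫ ≥ 0) :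
    β * ‖mulv D xk - zk1‖ ^ 2 ≥
      β * ‖mulv D xk - mulv D xk1‖ ^ 2 + (1 / β) * ‖lk - lk1‖ ^ 2 := by
  have A1 := hk1 xk hxk
  have A2 := hk xk1 hxk1
  have h4 : lk - lk1 = β • (mulv D xk1 - zk1) := by rw [h3]; abel
  set u : EuclideanSpace ℝ (Fin n) := mulv D xk - mulv D xk1 with hu
  set v : EuclideanSpace ℝ (Fin n) := mulv D xk1 - zk1 with hv
  have e : ⟪xk - xk1, -(mulv D.transpose lk1)⟫ + ⟪xk1 - xk, -(mulv D.transpose lk)⟫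
      = β * ⟪u, v⟫ := by
    have e1 : ⟪xk - xk1, -(mulv D.transpose lk1)⟫ + ⟪xk1 - xk, -(mulv D.transpose lk)⟫
        = ⟪xk - xk1, mulv D.transpose lk - mulv D.transpose lk1⟫ := by
      simp only [inner_sub_left, inner_sub_right, inner_neg_right]
      ring
    rw [e1, mulv_sub', mulv_adj', ← mulv_sub', ← hu, h4, real_inner_smul_right]
  have key : 0 ≤ ⟪u, v⟫ := by
    have hb : 0 ≤ β * ⟪u, v⟫ := by
      rw [← e]; linarith
    nlinarith
  have hn : ‖mulv D xk - zk1‖ ^ 2 = ‖u‖ ^ 2 + 2 * ⟪u, v⟫ + ‖v‖ ^ 2 := by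
    have huv : mulv D xk - zk1 = u + v := by rw [hu, hv]; abel
    rw [huv, norm_add_sq_real]
  have hl : ‖lk - lk1‖ ^ 2 = β ^ 2 * ‖v‖ ^ 2 := by
    rw [h4, norm_smul, Real.norm_eq_abs, abs_of_pos hβ, mul_pow]
  have hfi : (1 / β) * (β ^ 2 * ‖v‖ ^ 2) = β * ‖v‖ ^ 2 := by
    field_simp
  rw [hn, hl, hfi]
  nlinarith [mul_nonneg hβ.le key]
end
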